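/- arXiv:0811.3193 — 6 statements merged into one kernel-verified Lean document; each statement's English description precedes it below -/
import Mathlib

section
/- Let X be a proper metric space on which a group Γ acts geometrically (by isometries, properly discontinuously, and cocompactly). Let F be a Γ-invariant collection of unbounded, closed, connected subsets of X such that for each positive real r there is a constant ρ(r) < ∞ so that for any two distinct elements C, C' of F, the diameter of the intersection of the open r-neighborhoods of C and C' is at most ρ(r). Then: (a) F is locally finite, i.e. every compact subset of X meets only finitely many members of F; (b) F contains only finitely many Γ-orbits, i.e. there is a finite subcollection F₀ ⊆ F such that every member of F is the image of some member of F₀ under some element of Γ; and (c) each C ∈ F is Γ-periodic, i.e. there is a compact set K_C ⊆ X such that C is contained in the union of the images of K_C under the stabilizer {γ ∈ Γ : γ·C = C}. -/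
open scoped Pointwise

/-- An `r`-separated subset of a compact set is finite. -/
lemma separated_finite {X : Type*} [MetricSpace X] {K : Set X} (hK : IsCompact K)
    {r : ℝ} (hr : 0 < r) {T : Set X} (hTK : T ⊆ K)
    (hsep : ∀ x ∈ T, ∀ y ∈ T, x ≠ y → r ≤ dist x y) : T.Finite := by
  classical
  obtain ⟨t, htfin, htcov⟩ :=
    (Metric.totallyBounded_iff.mp hK.totallyBounded) (r / 2) (by linarith)
  have hc : ∀ x ∈ T, ∃ c ∈ t, x ∈ Metric.ball c (r / 2) := by
    intro x hx
    have := htcov (hTK hx)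
    simpa using this
  choose! c hct hcball using hc
  have hinj : Set.InjOn c T := by
    intro x hx y hy hxy
    by_contra hne
    have h1 := hcball x hx
    have h2 := hcball y hy
    rw [hxy] at h1
    have : dist x y < r := by
      have := dist_triangle x (c y) y
      rw [Metric.mem_ball] at h1 h2
      rw [dist_comm y (c y)] at h2
      linarith
    exact absurd (hsep x hx y hy hne) (not_le.mpr this)
  have himg : (c '' T).Finite := htfin.subset (by rintro _ ⟨x, hx, rfl⟩; exact hct x hx)
  exact himg.of_finite_image hinj

/-- An unbounded connected set meets every sphere of sufficiently large radius. -/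
lemma exists_on_sphere {X : Type*} [MetricSpace X] {C : Set X} (hconn : IsConnected C)
    (hunb : ¬ Bornology.IsBounded C) (x₀ : X) {p : X} (hp : p ∈ C) {s : ℝ}
    (hs : dist x₀ p ≤ s) : ∃ y ∈ C, dist x₀ y = s := by
  obtain ⟨q, hqC, hqs⟩ : ∃ q ∈ C, s ≤ dist x₀ q := by
    by_contra h
    push_neg at h
    exact hunb ((Metric.isBounded_ball (x := x₀) (r := s)).subset
      (fun y hy => Metric.mem_ball.mpr (by rw [dist_comm]; exact h y hy)))
  have himg : IsPreconnected ((fun y => dist x₀ y) '' C) :=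
    (hconn.image _ (continuous_const.dist continuous_id).continuousOn).isPreconnected
  have hoc := himg.ordConnected
  have : s ∈ (fun y => dist x₀ y) '' C := by
    exact hoc.out ⟨p, hp, rfl⟩ ⟨q, hqC, rfl⟩ ⟨hs, hqs⟩
  obtain ⟨y, hyC, hy⟩ := this
  exact ⟨y, hyC, hy⟩

/-- Theorem A.0.1(1): let `X` be a proper metric space on which a group `Γ` acts
geometrically (by isometries, properly discontinuously, and cocompactly), and let `F`
be a `Γ`-invariant collection of unbounded, closed, connected subsets of `X` such that
for each `r > 0` there is `ρ(r) < ∞` bounding the diameter of the intersection of the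
open `r`-neighborhoods of any two distinct members of `F`.  Then:
(a) `F` is locally finite;
(b) `F` contains only finitely many `Γ`-orbits; and
(c) each `C ∈ F` is `Γ`-periodic, i.e. its stabilizer acts cocompactly on it. -/
theorem isolated_subsets_structure {X : Type*} [MetricSpace X] [ProperSpace X]
    {Γ : Type*} [Group Γ] [MulAction Γ X] [ProperlyDiscontinuousSMul Γ X]
    (hiso : ∀ γ : Γ, Isometry fun x : X => γ • x)
    (hcocompact : ∃ K : Set X, IsCompact K ∧ (⋃ γ : Γ, γ • K) = Set.univ)
    (F : Set (Set X))
    (hinv : ∀ C ∈ F, ∀ γ : Γ, γ • C ∈ F)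
    (hunb : ∀ C ∈ F, ¬ Bornology.IsBounded C)
    (hclosed : ∀ C ∈ F, IsClosed C)
    (hconn : ∀ C ∈ F, IsConnected C)
    (hisol : ∀ r : ℝ, 0 < r → ∃ ρ : ℝ, ∀ C ∈ F, ∀ C' ∈ F, C ≠ C' →
      EMetric.diam (Metric.thickening r C ∩ Metric.thickening r C') ≤ ENNReal.ofReal ρ) :
    (∀ K : Set X, IsCompact K → {C ∈ F | (C ∩ K).Nonempty}.Finite) ∧
    (∃ F₀ ⊆ F, F₀.Finite ∧ ∀ C ∈ F, ∃ C₀ ∈ F₀, ∃ γ : Γ, C = γ • C₀) ∧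
    (∀ C ∈ F, ∃ K_C : Set X, IsCompact K_C ∧
      C ⊆ ⋃ γ ∈ {γ : Γ | γ • C = C}, γ • K_C) := by
  classical
  obtain ⟨K₀, hK₀c, hK₀u⟩ := hcocompact
  -- Part (a): local finiteness
  have parta : ∀ K : Set X, IsCompact K → {C ∈ F | (C ∩ K).Nonempty}.Finite := by
    intro K hK
    rcases K.eq_empty_or_nonempty with hKe | ⟨x₀, hx₀⟩
    · have : {C ∈ F | (C ∩ K).Nonempty} = ∅ := by
        ext C; simp [hKe]
      rw [this]; exact Set.finite_empty
    set S := {C ∈ F | (C ∩ K).Nonempty} with hS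
    set r : ℝ := Metric.diam K + 1 with hrdef
    have hdiamK : 0 ≤ Metric.diam K := Metric.diam_nonneg
    have hr0 : 0 < r := by rw [hrdef]; linarith
    obtain ⟨ρ, hρ⟩ := hisol r hr0
    set ρ' : ℝ := max ρ 0 with hρ'def
    set s : ℝ := max (Metric.diam K) ρ' + 1 with hsdef
    have hs_diam : Metric.diam K < s := by
      rw [hsdef]; have := le_max_left (Metric.diam K) ρ'; linarith
    have hs_ρ : ρ' < s := by
      rw [hsdef]; have := le_max_right (Metric.diam K) ρ'; linarith
    -- choose a point on the sphere of radius s for each member of S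
    have hy : ∀ C, C ∈ S → ∃ y, y ∈ C ∧ dist x₀ y = s := by
      intro C hC
      obtain ⟨hCF, p, hpC, hpK⟩ := hC
      have hdp : dist x₀ p ≤ Metric.diam K :=
        Metric.dist_le_diam_of_mem hK.isBounded hx₀ hpK
      obtain ⟨y, hyC, hys⟩ := exists_on_sphere (hconn C hCF) (hunb C hCF) x₀ hpC
        (le_of_lt (lt_of_le_of_lt hdp hs_diam))
      exact ⟨y, hyC, hys⟩
    have hy' : ∀ C : Set X, ∃ y : X, C ∈ S → (y ∈ C ∧ dist x₀ y = s) := by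
      intro C
      by_cases hCS : C ∈ S
      · obtain ⟨y, h1, h2⟩ := hy C hCS
        exact ⟨y, fun _ => ⟨h1, h2⟩⟩
      · exact ⟨x₀, fun h => absurd h hCS⟩
    choose y hy2 using hy'
    have hyC : ∀ C, C ∈ S → y C ∈ C := fun C hC => (hy2 C hC).1
    have hys : ∀ C, C ∈ S → dist x₀ (y C) = s := fun C hC => (hy2 C hC).2
    -- the chosen points are r-separated
    have hx0mem : ∀ C ∈ S, x₀ ∈ Metric.thickening r C := by
      rintro C ⟨hCF, p, hpC, hpK⟩
      refine Metric.mem_thickening_iff.mpr ⟨p, hpC, ?_⟩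
      have : dist x₀ p ≤ Metric.diam K := Metric.dist_le_diam_of_mem hK.isBounded hx₀ hpK
      rw [hrdef]; linarith
    have hsep : ∀ C ∈ S, ∀ C' ∈ S, C ≠ C' → r ≤ dist (y C) (y C') := by
      intro C hC C' hC' hne
      by_contra h
      push_neg at h
      have hyCthC : y C ∈ Metric.thickening r C :=
        Metric.self_subset_thickening hr0 C (hyC C hC)
      have hyCthC' : y C ∈ Metric.thickening r C' :=
        Metric.mem_thickening_iff.mpr ⟨y C', hyC C' hC', h⟩
      have hdiam := hρ C hC.1 C' hC'.1 hne
      have hmem1 : x₀ ∈ Metric.thickening r C ∩ Metric.thickening r C' :=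
        ⟨hx0mem C hC, hx0mem C' hC'⟩
      have hmem2 : y C ∈ Metric.thickening r C ∩ Metric.thickening r C' :=
        ⟨hyCthC, hyCthC'⟩
      have h1 : edist x₀ (y C) ≤ ENNReal.ofReal ρ :=
        le_trans (EMetric.edist_le_diam_of_mem hmem1 hmem2) hdiam
      have h2 : ENNReal.ofReal s ≤ ENNReal.ofReal ρ' := by
        rw [edist_dist, hys C hC] at h1
        exact le_trans h1 (ENNReal.ofReal_le_ofReal (le_max_left ρ 0))
      have h3 : s ≤ ρ' :=
        (ENNReal.ofReal_le_ofReal_iff (le_max_right ρ 0)).mp h2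
      linarith
    -- conclude finiteness
    have hinjy : Set.InjOn y S := by
      intro C hC C' hC' hyy
      by_contra hne
      have := hsep C hC C' hC' hne
      rw [hyy, dist_self] at this
      linarith
    have himfin : (y '' S).Finite := by
      refine separated_finite (isCompact_closedBall x₀ s) hr0 ?_ ?_
      · rintro _ ⟨C, hC, rfl⟩
        rw [Metric.mem_closedBall, dist_comm]
        exact le_of_eq (hys C hC)
      · rintro _ ⟨C, hC, rfl⟩ _ ⟨C', hC', rfl⟩ hne
        exact hsep C hC C' hC' (fun hCC' => hne (by rw [hCC']))
    exact himfin.of_finite_image hinjy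
  refine ⟨parta, ?_, ?_⟩
  -- Part (b): finitely many orbits
  · refine ⟨{C ∈ F | (C ∩ K₀).Nonempty}, fun C hC => hC.1, parta K₀ hK₀c, ?_⟩
    intro C hC
    obtain ⟨x, hx⟩ : C.Nonempty := by
      rcases C.eq_empty_or_nonempty with h | h
      · exact absurd (h ▸ Bornology.isBounded_empty) (hunb C hC)
      · exact h
    have : x ∈ ⋃ γ : Γ, γ • K₀ := hK₀u ▸ Set.mem_univ x
    obtain ⟨γ, k, hkK₀, hγk⟩ : ∃ γ : Γ, ∃ k ∈ K₀, γ • k = x := by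
      simpa [Set.mem_smul_set] using this
    refine ⟨γ⁻¹ • C, ⟨hinv C hC γ⁻¹, k, ?_, hkK₀⟩, γ, by rw [smul_inv_smul]⟩
    refine ⟨x, hx, ?_⟩
    show γ⁻¹ • x = k
    rw [← hγk, inv_smul_smul]
  -- Part (c): periodicity
  · intro C hC
    set F' := {D ∈ F | (D ∩ K₀).Nonempty} with hF'
    have hF'fin : F'.Finite := parta K₀ hK₀c
    set I := {D ∈ F' | ∃ γ : Γ, γ • D = C} with hI
    have hIfin : I.Finite := hF'fin.subset (fun D hD => hD.1)
    set g : Set X → Γ := fun D => if h : ∃ γ : Γ, γ • D = C then h.choose else 1 with hg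
    refine ⟨⋃ D ∈ I, g D • K₀, ?_, ?_⟩
    · refine hIfin.isCompact_biUnion (fun D _ => ?_)
      rw [← Set.image_smul]
      exact hK₀c.image (hiso (g D)).continuous
    · intro c hcC
      have : c ∈ ⋃ γ : Γ, γ • K₀ := hK₀u ▸ Set.mem_univ c
      obtain ⟨γ, k, hkK₀, hγk⟩ : ∃ γ : Γ, ∃ k ∈ K₀, γ • k = c := by
        simpa [Set.mem_smul_set] using this
      set D := γ⁻¹ • C with hD
      have hDC : γ • D = C := by rw [hD, smul_inv_smul]
      have hDI : D ∈ I := by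
        refine ⟨⟨hinv C hC γ⁻¹, k, ?_, hkK₀⟩, γ, hDC⟩
        refine ⟨c, hcC, ?_⟩
        show γ⁻¹ • c = k
        rw [← hγk, inv_smul_smul]
      have hex : ∃ γ' : Γ, γ' • D = C := ⟨γ, hDC⟩
      have hgD : g D • D = C := by
        rw [hg]; simp only [dif_pos hex]; exact hex.choose_spec
      set σ := γ * (g D)⁻¹ with hσ
      have hσstab : σ • C = C := by
        have : (g D)⁻¹ • C = D := by rw [← hgD, inv_smul_smul]
        rw [hσ, mul_smul, this, hDC]
      refine Set.mem_biUnion hσstab ?_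
      have hsub : σ • (g D • K₀) ⊆ σ • ⋃ D' ∈ I, g D' • K₀ :=
        Set.smul_set_mono (Set.subset_biUnion_of_mem (u := fun D' => g D' • K₀) hDI)
      refine hsub ?_
      refine ⟨g D • k, Set.smul_mem_smul_set hkK₀, ?_⟩
      show σ • (g D • k) = c
      rw [smul_smul, hσ, inv_mul_cancel_right, hγk]
end

section
/- Let X be a proper metric space and let F be a collection of unbounded, closed, connected subsets of X such that for each positive real r there is a constant ρ(r) < ∞ so that for any two distinct elements C, C' of F, the diameter of the intersection of the open r-neighborhoods of C and C' is at most ρ(r). Then F is locally finite: every compact subset of X (equivalently, every closed metric ball in X) meets only finitely many members of F. -/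
/-- Lemma 3.1.1: in a proper metric space, a collection `F` of unbounded, closed,
connected subsets such that for each `r > 0` there is `ρ(r) < ∞` bounding the diameter
of the intersection of the open `r`-neighborhoods of any two distinct members of `F`,
is locally finite: every compact subset meets only finitely many members of `F`. -/
theorem locally_finite_of_isolated {X : Type*} [MetricSpace X] [ProperSpace X]
    (F : Set (Set X))
    (hunb : ∀ C ∈ F, ¬ Bornology.IsBounded C)
    (hclosed : ∀ C ∈ F, IsClosed C)
    (hconn : ∀ C ∈ F, IsConnected C)
    (hisol : ∀ r : ℝ, 0 < r → ∃ ρ : ℝ, ∀ C ∈ F, ∀ C' ∈ F, C ≠ C' →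
      EMetric.diam (Metric.thickening r C ∩ Metric.thickening r C') ≤ ENNReal.ofReal ρ) :
    ∀ K : Set X, IsCompact K → {C ∈ F | (C ∩ K).Nonempty}.Finite := by
  intro K hK
  by_contra hfin
  have hinf : {C ∈ F | (C ∩ K).Nonempty}.Infinite := hfin
  set S := {C ∈ F | (C ∩ K).Nonempty} with hS
  -- pick a base point in K
  obtain ⟨C₀, hC₀⟩ := hinf.nonempty
  obtain ⟨y₀, -, hy₀K⟩ := hC₀.2
  -- K is bounded: get R with K ⊆ closedBall y₀ R, R ≥ 0
  obtain ⟨R₀, hR₀⟩ := hK.isBounded.subset_closedBall y₀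
  set R : ℝ := max R₀ 0 with hRdef
  have hKball : K ⊆ Metric.closedBall y₀ R :=
    hR₀.trans (Metric.closedBall_subset_closedBall (le_max_left _ _))
  have hR0 : (0:ℝ) ≤ R := le_max_right _ _
  obtain ⟨ρ, hρ⟩ := hisol 1 one_pos
  set s : ℝ := R + 1 + (max ρ 0 + 1) with hsdef
  have hRs : R + 1 ≤ s := by
    have : (0:ℝ) ≤ max ρ 0 := le_max_right _ _
    simp only [hsdef]; linarith
  -- for each C ∈ S choose points at distance R+1 and s from y₀
  have key : ∀ C : Set X, ∃ z x : X, C ∈ S →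
      z ∈ C ∧ x ∈ C ∧ dist y₀ z = R + 1 ∧ dist y₀ x = s := by
    intro C
    by_cases hC : C ∈ S
    · obtain ⟨hCF, y, hyC, hyK⟩ := hC
      -- unboundedness: find a far point
      have : ∃ w ∈ C, s ≤ dist y₀ w := by
        by_contra h
        push_neg at h
        exact hunb C hCF (Metric.isBounded_ball.subset
          (fun w hw => Metric.mem_ball'.mpr (h w hw)))
      obtain ⟨w, hwC, hws⟩ := this
      have hyR : dist y₀ y ≤ R := by
        have := hKball hyK
        rwa [Metric.mem_closedBall, dist_comm] at this
      have hiv := (hconn C hCF).isPreconnected.intermediate_value hyC hwC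
        (f := fun p => dist y₀ p) (continuous_const.dist continuous_id).continuousOn
      have hz : (R + 1) ∈ (fun p => dist y₀ p) '' C := by
        apply hiv; constructor <;> [linarith; linarith]
      have hx : s ∈ (fun p => dist y₀ p) '' C := by
        apply hiv; constructor <;> [linarith; linarith]
      obtain ⟨z, hzC, hzd⟩ := hz
      obtain ⟨x, hxC, hxd⟩ := hx
      exact ⟨z, x, fun _ => ⟨hzC, hxC, hzd, hxd⟩⟩
    · exact ⟨y₀, y₀, fun h => absurd h hC⟩
  choose z x hkey using key
  -- the pairs (z C, x C) live in a compact set; cover by balls of radius 1/2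
  have hcomp : IsCompact ((Metric.sphere y₀ (R+1)) ×ˢ (Metric.sphere y₀ s)) :=
    (isCompact_sphere y₀ (R+1)).prod (isCompact_sphere y₀ s)
  obtain ⟨t, -, htfin, htcov⟩ := hcomp.finite_cover_balls (e := 1/2) (by norm_num)
  have hmem : ∀ C ∈ S, (z C, x C) ∈ (Metric.sphere y₀ (R+1)) ×ˢ (Metric.sphere y₀ s) := by
    intro C hC
    obtain ⟨-, -, hzd, hxd⟩ := hkey C hC
    exact ⟨by simpa [Metric.mem_sphere, dist_comm] using hzd,
      by simpa [Metric.mem_sphere, dist_comm] using hxd⟩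
  have hc : ∀ C : Set X, ∃ c : X × X, C ∈ S → c ∈ t ∧ (z C, x C) ∈ Metric.ball c (1/2) := by
    intro C
    by_cases hC : C ∈ S
    · have := htcov (hmem C hC)
      simp only [Set.mem_iUnion] at this
      obtain ⟨c, hct, hcb⟩ := this
      exact ⟨c, fun _ => ⟨hct, hcb⟩⟩
    · exact ⟨(y₀, y₀), fun h => absurd h hC⟩
  choose c hcspec using hc
  obtain ⟨C, hCS, C', hC'S, hne, hcc⟩ :=
    hinf.exists_ne_map_eq_of_mapsTo (f := c) (fun C hC => (hcspec C hC).1) htfin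
  obtain ⟨hzC, hxC, hzdC, hxdC⟩ := hkey C hCS
  obtain ⟨hzC', hxC', hzdC', hxdC'⟩ := hkey C' hC'S
  -- the two pairs are close
  have hdist : dist (z C, x C) (z C', x C') < 1 := by
    calc dist (z C, x C) (z C', x C')
        ≤ dist (z C, x C) (c C) + dist (c C) (z C', x C') := dist_triangle _ _ _
      _ < 1/2 + 1/2 := by
          refine add_lt_add ?_ ?_
          · exact (hcspec C hCS).2
          · rw [dist_comm, hcc]; exact (hcspec C' hC'S).2
      _ = 1 := by norm_num
  have hdz : dist (z C) (z C') < 1 :=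
    lt_of_le_of_lt (by rw [Prod.dist_eq]; exact le_max_left _ _) hdist
  have hdx : dist (x C) (x C') < 1 :=
    lt_of_le_of_lt (by rw [Prod.dist_eq]; exact le_max_right _ _) hdist
  -- z C and x C are in both 1-thickenings
  have hzmem : z C ∈ Metric.thickening 1 C ∩ Metric.thickening 1 C' :=
    ⟨Metric.self_subset_thickening one_pos C hzC,
      Metric.mem_thickening_iff.mpr ⟨z C', hzC', hdz⟩⟩
  have hxmem : x C ∈ Metric.thickening 1 C ∩ Metric.thickening 1 C' :=
    ⟨Metric.self_subset_thickening one_pos C hxC,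
      Metric.mem_thickening_iff.mpr ⟨x C', hxC', hdx⟩⟩
  have hdiam := hρ C hCS.1 C' hC'S.1 hne
  have hle : edist (z C) (x C) ≤ ENNReal.ofReal ρ :=
    (EMetric.edist_le_diam_of_mem hzmem hxmem).trans hdiam
  -- but z C and x C are far apart
  have hfar : max ρ 0 + 1 ≤ dist (z C) (x C) := by
    have h1 : dist y₀ (x C) ≤ dist y₀ (z C) + dist (z C) (x C) := dist_triangle _ _ _
    rw [hxdC, hzdC] at h1
    linarith
  have : ENNReal.ofReal (max ρ 0 + 1) ≤ ENNReal.ofReal ρ := by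
    calc ENNReal.ofReal (max ρ 0 + 1) ≤ ENNReal.ofReal (dist (z C) (x C)) :=
          ENNReal.ofReal_le_ofReal hfar
      _ = edist (z C) (x C) := (edist_dist _ _).symm
      _ ≤ ENNReal.ofReal ρ := hle
  have h2 : ENNReal.ofReal (max ρ 0 + 1) ≤ ENNReal.ofReal (max ρ 0) :=
    this.trans (ENNReal.ofReal_le_ofReal (le_max_left _ _))
  rw [ENNReal.ofReal_le_ofReal_iff (le_max_right _ _)] at h2
  linarith
end

section
/- Let X be a metric space, let C ⊆ X be a connected, unbounded subset, and let x ∈ X, r ≥ 0 and ρ > 0. If there exists a point c ∈ C with d(x,c) ≤ r, then the diameter of C ∩ B̄(x, r+ρ) is at least ρ, where B̄(x, r+ρ) denotes the closed ball of radius r+ρ about x. -/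
/-- A connected unbounded subset `C` of a metric space that meets the closed ball
`B̄(x,r)` has trace of diameter at least `ρ` in the closed ball `B̄(x, r+ρ)`. -/
theorem diam_inter_closedBall_ge {X : Type*} [MetricSpace X]
    (C : Set X) (hCconn : IsConnected C) (hCunb : ¬ Bornology.IsBounded C)
    (x : X) (r ρ : ℝ) (hr : 0 ≤ r) (hρ : 0 < ρ)
    (hmeet : ∃ c ∈ C, dist x c ≤ r) :
    ρ ≤ Metric.diam (C ∩ Metric.closedBall x (r + ρ)) := by
  obtain ⟨c, hcC, hcr⟩ := hmeet
  -- a far point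
  have hfar : ∃ c' ∈ C, ¬ c' ∈ Metric.closedBall x (r + ρ) := by
    by_contra h
    push_neg at h
    exact hCunb ((Metric.isBounded_closedBall (x := x) (r := r + ρ)).subset h)
  obtain ⟨c'', hc''C, hc''⟩ := hfar
  rw [Metric.mem_closedBall, not_le, dist_comm] at hc''
  -- image of dist is connected, hence ord-connected; find point at distance r+ρ
  have himg : IsConnected ((fun y => dist x y) '' C) :=
    hCconn.image _ (Continuous.continuousOn (continuous_const.dist continuous_id))
  have hoc := himg.isPreconnected.ordConnected
  have h1 : dist x c ∈ (fun y => dist x y) '' C := ⟨c, hcC, rfl⟩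
  have h2 : dist x c'' ∈ (fun y => dist x y) '' C := ⟨c'', hc''C, rfl⟩
  have hmem : (r + ρ) ∈ (fun y => dist x y) '' C := by
    apply hoc.out h1 h2
    constructor
    · linarith
    · linarith
  obtain ⟨c', hc'C, hc'⟩ := hmem
  have hbd : Bornology.IsBounded (C ∩ Metric.closedBall x (r + ρ)) :=
    (Metric.isBounded_closedBall).subset Set.inter_subset_right
  have hc'mem : c' ∈ C ∩ Metric.closedBall x (r + ρ) :=
    ⟨hc'C, by rw [Metric.mem_closedBall, dist_comm]; exact le_of_eq hc'⟩
  have hcmem : c ∈ C ∩ Metric.closedBall x (r + ρ) :=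
    ⟨hcC, by rw [Metric.mem_closedBall, dist_comm]; linarith⟩
  have hd : ρ ≤ dist c c' := by
    have ht := dist_triangle x c c'
    simp only at hc'
    linarith
  exact hd.trans (Metric.dist_le_diam_of_mem hbd hcmem hc'mem)
end

section
/- Let X be a metric space and Γ a group acting on X by isometries and cocompactly, i.e. there is a compact set K ⊆ X with X = ⋃_{γ∈Γ} γ·K. Let F be a Γ-invariant collection of nonempty closed subsets of X that is locally finite (every compact subset of X meets only finitely many members of F). Then F contains only finitely many Γ-orbits: there is a finite subcollection F₀ ⊆ F such that every C ∈ F equals γ·C₀ for some γ ∈ Γ and some C₀ ∈ F₀. -/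
open scoped Pointwise

/-- If a group `Γ` acts by isometries and cocompactly on a metric space `X`, then any
`Γ`-invariant, locally finite collection `F` of nonempty closed subsets of `X` contains
only finitely many `Γ`-orbits: there is a finite subcollection `F₀ ⊆ F` such that every
member of `F` is the image of some member of `F₀` under some element of `Γ`. -/
theorem finitely_many_orbits {X : Type*} [MetricSpace X] {Γ : Type*} [Group Γ]
    [MulAction Γ X]
    (hiso : ∀ γ : Γ, Isometry fun x : X => γ • x)
    (hcocompact : ∃ K : Set X, IsCompact K ∧ (⋃ γ : Γ, γ • K) = Set.univ)
    (F : Set (Set X))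
    (hne : ∀ C ∈ F, C.Nonempty)
    (hclosed : ∀ C ∈ F, IsClosed C)
    (hinv : ∀ C ∈ F, ∀ γ : Γ, γ • C ∈ F)
    (hlf : ∀ K : Set X, IsCompact K → {C ∈ F | (C ∩ K).Nonempty}.Finite) :
    ∃ F₀ ⊆ F, F₀.Finite ∧ ∀ C ∈ F, ∃ C₀ ∈ F₀, ∃ γ : Γ, C = γ • C₀ := by
  obtain ⟨K, hK, hKcov⟩ := hcocompact
  refine ⟨{C ∈ F | (C ∩ K).Nonempty}, fun C hC => hC.1, hlf K hK, ?_⟩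
  intro C hC
  obtain ⟨x, hx⟩ := hne C hC
  have : x ∈ ⋃ γ : Γ, γ • K := hKcov ▸ Set.mem_univ x
  obtain ⟨_, ⟨γ, rfl⟩, hγ⟩ := this
  refine ⟨γ⁻¹ • C, ⟨hinv C hC γ⁻¹, ⟨γ⁻¹ • x, ?_, ?_⟩⟩, γ, (smul_inv_smul γ C).symm⟩
  · exact Set.smul_mem_smul_set hx
  · obtain ⟨k, hk, hkx⟩ := hγ
    rwa [← hkx, inv_smul_smul]
end

section
/- Let X be a proper metric space and Γ a group acting on X by isometries and cocompactly, i.e. there is a compact set K ⊆ X with X = ⋃_{γ∈Γ} γ·K. Let F be a Γ-invariant collection of nonempty closed subsets of X that is locally finite (every compact subset of X meets only finitely many members of F). Then every C ∈ F is Γ-periodic: there is a compact set K_C ⊆ X such that C ⊆ ⋃_{γ ∈ Stab(C)} γ·K_C, where Stab(C) = {γ ∈ Γ : γ·C = C}. -/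
open scoped Pointwise

/-- If a group `Γ` acts by isometries and cocompactly on a proper metric space `X`, then
every member `C` of a `Γ`-invariant, locally finite collection `F` of nonempty closed
subsets of `X` is `Γ`-periodic: there is a compact set `K_C` with
`C ⊆ ⋃_{γ ∈ Stab(C)} γ • K_C`. -/
theorem periodic_of_locally_finite {X : Type*} [MetricSpace X] [ProperSpace X]
    {Γ : Type*} [Group Γ] [MulAction Γ X]
    (hiso : ∀ γ : Γ, Isometry fun x : X => γ • x)
    (hcocompact : ∃ K : Set X, IsCompact K ∧ (⋃ γ : Γ, γ • K) = Set.univ)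
    (F : Set (Set X))
    (hne : ∀ C ∈ F, C.Nonempty)
    (hclosed : ∀ C ∈ F, IsClosed C)
    (hinv : ∀ C ∈ F, ∀ γ : Γ, γ • C ∈ F)
    (hlf : ∀ K : Set X, IsCompact K → {C ∈ F | (C ∩ K).Nonempty}.Finite) :
    ∀ C ∈ F, ∃ K_C : Set X, IsCompact K_C ∧
      C ⊆ ⋃ γ ∈ {γ : Γ | γ • C = C}, γ • K_C := by
  classical
  obtain ⟨K, hK, hKU⟩ := hcocompact
  intro C hC
  set S : Set (Set X) := {D ∈ F | (D ∩ K).Nonempty} with hSdef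
  have hSfin : S.Finite := hlf K hK
  -- choose, for each D which is a translate of C, a witness
  set g : Set X → Γ := fun D => if h : ∃ δ : Γ, D = δ • C then h.choose else 1 with hgdef
  have hg : ∀ D : Set X, (∃ δ : Γ, D = δ • C) → D = g D • C := by
    intro D h
    simp only [hgdef, dif_pos h]
    exact h.choose_spec
  refine ⟨⋃ D ∈ S, (g D)⁻¹ • K, ?_, ?_⟩
  · exact hSfin.isCompact_biUnion fun D _ =>
      hK.image (hiso ((g D)⁻¹)).continuous
  · intro x hx
    have hxU : x ∈ ⋃ γ : Γ, γ • K := by rw [hKU]; trivial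
    obtain ⟨δ, hδ⟩ := Set.mem_iUnion.mp hxU
    have hxK : δ⁻¹ • x ∈ K := by
      obtain ⟨k, hk, hkx⟩ := hδ
      rw [← hkx, inv_smul_smul]
      exact hk
    have hDS : (δ⁻¹ • C) ∈ S := by
      refine ⟨hinv C hC δ⁻¹, ⟨δ⁻¹ • x, ?_, hxK⟩⟩
      exact Set.smul_mem_smul_set hx
    have hDC : δ⁻¹ • C = g (δ⁻¹ • C) • C := hg _ ⟨δ⁻¹, rfl⟩
    set γ := δ * g (δ⁻¹ • C) with hγ
    have hstab : γ • C = C := by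
      rw [hγ, mul_smul, ← hDC, smul_inv_smul]
    refine Set.mem_biUnion hstab ?_
    have hxmem : x ∈ γ • ((g (δ⁻¹ • C))⁻¹ • K) := by
      rw [smul_smul, hγ, mul_inv_cancel_right]
      exact hδ
    exact Set.smul_set_mono (Set.subset_biUnion_of_mem hDS) hxmem
end

section
/- Let X be a metric space, let C and C' be nonempty subsets of X, let p, q ∈ X and let ε₀ ≥ 0. Suppose that for all a ∈ C and a' ∈ C' there exists a geodesic from a to a', and that every geodesic γ : [0, d(a,a')] → X from a point a ∈ C to a point a' ∈ C' admits parameters 0 ≤ s ≤ t ≤ d(a,a') with d(γ(s), p) ≤ ε₀ and d(γ(t), q) ≤ ε₀. Then for all a, b ∈ C and a', b' ∈ C' we have d(a,b) + d(a',b') ≤ d(a,a') + d(b,b') + 4ε₀. -/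
/-- `γ : ℝ → X` (restricted to `[0, d(a,a')]`) is a geodesic from `a` to `a'`:
it starts at `a`, ends at `a'`, and is an isometric map on `[0, d(a,a')]`. -/
def IsGeodesicFromTo {X : Type*} [MetricSpace X] (a a' : X) (γ : ℝ → X) : Prop :=
  γ 0 = a ∧ γ (dist a a') = a' ∧
    ∀ s ∈ Set.Icc (0 : ℝ) (dist a a'), ∀ t ∈ Set.Icc (0 : ℝ) (dist a a'),
      dist (γ s) (γ t) = |s - t|

/-- Corollary `FourPoint`: if every pair of points `a ∈ C`, `a' ∈ C'` is joined by a
geodesic, and every geodesic from `C` to `C'` passes (in order) within distance `ε₀`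
first of `p` and then of `q`, then for all `a, b ∈ C` and `a', b' ∈ C'` we have
`d(a,b) + d(a',b') ≤ d(a,a') + d(b,b') + 4ε₀`. -/
theorem four_point_of_geodesics_near {X : Type*} [MetricSpace X]
    (C C' : Set X) (hC : C.Nonempty) (hC' : C'.Nonempty)
    (p q : X) (ε₀ : ℝ) (hε₀ : 0 ≤ ε₀)
    (hgeo : ∀ a ∈ C, ∀ a' ∈ C', ∃ γ : ℝ → X, IsGeodesicFromTo a a' γ)
    (hnear : ∀ a ∈ C, ∀ a' ∈ C', ∀ γ : ℝ → X, IsGeodesicFromTo a a' γ →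
      ∃ s t : ℝ, 0 ≤ s ∧ s ≤ t ∧ t ≤ dist a a' ∧
        dist (γ s) p ≤ ε₀ ∧ dist (γ t) q ≤ ε₀) :
    ∀ a ∈ C, ∀ b ∈ C, ∀ a' ∈ C', ∀ b' ∈ C',
      dist a b + dist a' b' ≤ dist a a' + dist b b' + 4 * ε₀ := by
  have key : ∀ a ∈ C, ∀ a' ∈ C', dist a p + dist q a' ≤ dist a a' + 2 * ε₀ := by
    intro a ha a' ha'
    obtain ⟨γ, hγ⟩ := hgeo a ha a' ha'
    obtain ⟨s, t, hs0, hst, htd, hsp, htq⟩ := hnear a ha a' ha' γ hγ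
    obtain ⟨h0, hd, hiso⟩ := hγ
    have hsI : s ∈ Set.Icc (0:ℝ) (dist a a') := ⟨hs0, hst.trans htd⟩
    have htI : t ∈ Set.Icc (0:ℝ) (dist a a') := ⟨hs0.trans hst, htd⟩
    have hdI : dist a a' ∈ Set.Icc (0:ℝ) (dist a a') := ⟨dist_nonneg, le_refl _⟩
    have h0I : (0:ℝ) ∈ Set.Icc (0:ℝ) (dist a a') := ⟨le_refl _, dist_nonneg⟩
    have h1 : dist a (γ s) = s := by
      have := hiso 0 h0I s hsI
      rw [h0] at this
      rw [this, abs_of_nonpos (by linarith)]; ring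
    have h2 : dist (γ t) a' = dist a a' - t := by
      have := hiso t htI (dist a a') hdI
      rw [hd] at this
      rw [this, abs_of_nonpos (by linarith)]; ring
    calc dist a p + dist q a'
        ≤ (dist a (γ s) + dist (γ s) p) + (dist q (γ t) + dist (γ t) a') := by
          gcongr <;> exact dist_triangle _ _ _
      _ ≤ (s + ε₀) + (ε₀ + (dist a a' - t)) := by
          rw [dist_comm q (γ t)]
          gcongr <;> simp [h1, h2, hsp, htq, le_refl]
      _ ≤ dist a a' + 2 * ε₀ := by linarith
  intro a ha b hb a' ha' b' hb'
  have k1 := key a ha a' ha'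
  have k2 := key b hb b' hb'
  have t1 : dist a b ≤ dist a p + dist p b := dist_triangle _ _ _
  have t2 : dist a' b' ≤ dist a' q + dist q b' := dist_triangle _ _ _
  have e1 : dist p b = dist b p := dist_comm _ _
  have e2 : dist a' q = dist q a' := dist_comm _ _
  linarith
end
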